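/- Let a, h, μ, ψ be nonnegative reals with h > 0, μ > 0, K a positive integer, satisfying h²/(1 + a²h²)^K = μ − ψ and a²·ψ = 0. Then a² = ((h²)^{1/K}/h²) · max( μ^{-1/K} − (h²)^{-1/K}, 0 ). -/

import Mathlib

/-!
If the constraint is inactive (`ψ = 0`), the stationarity equation `h² / (1 + a²h²)^K = μ` is
solved by taking a `K`-th root, which gives `a²h² = (h²/μ)^{1/K} - 1 ≥ 0`, and this is the
positive branch of the `max`. If the constraint is active (`a = 0`), the equation reads
`h² = μ - ψ ≤ μ`, so `μ^{-1/K} ≤ (h²)^{-1/K}` and the `max` vanishes.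
-/

open Real

theorem eq_rpow_one_div_of_div_pow_eq {g t μ : ℝ} {K : ℕ} (hK : K ≠ 0) (hg : g ≠ 0) (ht : 0 ≤ t)
    (h : g / t ^ K = μ) : t = (g / μ) ^ ((1 : ℝ) / K) := by
  have htK : t ^ K = g / μ := by rw [← h, div_div_cancel₀ hg]
  rw [← htK, one_div, pow_rpow_inv_natCast ht hK]

theorem div_rpow_sub_one {g μ : ℝ} (hg : 0 < g) (hμ : 0 ≤ μ) (s : ℝ) :
    (g / μ) ^ s - 1 = g ^ s * (μ ^ (-s) - g ^ (-s)) := by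
  rw [mul_sub, ← rpow_add hg, add_neg_cancel, rpow_zero, div_rpow hg.le hμ, rpow_neg hμ,
    div_eq_mul_inv]

theorem eq_of_div_one_add_mul_pow_eq {g x μ : ℝ} {K : ℕ} (hK : K ≠ 0) (hg : 0 < g) (hx : 0 ≤ x)
    (h : g / (1 + x * g) ^ K = μ) :
    x = g ^ ((1 : ℝ) / K) / g * (μ ^ (-(1 : ℝ) / K) - g ^ (-(1 : ℝ) / K)) := by
  have hμ : 0 ≤ μ := h ▸ by positivity
  have hroot := eq_rpow_one_div_of_div_pow_eq hK hg.ne' (by positivity) h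
  rw [neg_div, div_mul_eq_mul_div, ← div_rpow_sub_one hg hμ, ← hroot, add_sub_cancel_left,
    mul_div_cancel_right₀ _ hg.ne']

theorem waterfilling_scalar_general (a h μ ψ : ℝ) (K : ℕ)
    (hh : 0 < h) (hψ : 0 ≤ ψ) (hK : 0 < K)
    (heq : h ^ 2 / (1 + a ^ 2 * h ^ 2) ^ K = μ - ψ)
    (hcs : a ^ 2 * ψ = 0) :
    a ^ 2 = ((h ^ 2) ^ ((1 : ℝ) / K) / h ^ 2) *
      max (μ ^ (-(1 : ℝ) / K) - (h ^ 2) ^ (-(1 : ℝ) / K)) 0 := by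
  have hg : 0 < h ^ 2 := by positivity
  have hexp : -(1 : ℝ) / K ≤ 0 := div_nonpos_of_nonpos_of_nonneg (by norm_num) K.cast_nonneg
  rcases mul_eq_zero.mp hcs with ha | rfl
  · have hgμ : h ^ 2 ≤ μ := by
      rw [ha, zero_mul, add_zero, one_pow, div_one] at heq
      linarith
    rw [ha, max_eq_right (sub_nonpos.mpr (rpow_le_rpow_of_nonpos hg hgμ hexp)), mul_zero]
  · rw [sub_zero] at heq
    have hμ : 0 < μ := heq ▸ by positivity
    have hμg : μ ≤ h ^ 2 := heq ▸ div_le_self hg.le (one_le_pow₀ (by nlinarith))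
    rw [max_eq_left (sub_nonneg.mpr (rpow_le_rpow_of_nonpos hμ hμg hexp))]
    exact eq_of_div_one_add_mul_pow_eq hK.ne' hg (sq_nonneg a) heq

theorem waterfilling_scalar (a h μ ψ : ℝ) (K : ℕ)
    (ha : 0 ≤ a) (hh : 0 < h) (hμ : 0 < μ) (hψ : 0 ≤ ψ) (hK : 0 < K)
    (heq : h ^ 2 / (1 + a ^ 2 * h ^ 2) ^ K = μ - ψ)
    (hcs : a ^ 2 * ψ = 0) :
    a ^ 2 = ((h ^ 2) ^ ((1 : ℝ) / K) / h ^ 2) *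
      max (μ ^ (-(1 : ℝ) / K) - (h ^ 2) ^ (-(1 : ℝ) / K)) 0 :=
  waterfilling_scalar_general a h μ ψ K hh hψ hK heq hcs
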